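/- Let ω ∈ ℝ with sin ω ≠ 0, and suppose φ₁, φ₂ : V → ℂ are both vertex eigenfunctions of frequency ω. For each oriented edge e and j = 1,2 set A_{e,j} = φ_j(e₀) and B_{e,j} = (φ_j(e₁) − φ_j(e₀)·cos ω)/sin ω. Then Σ_{e ∈ E} [ cos(ω)·A_{e,1}·conj(A_{e,2}) + sin(ω)·(A_{e,1}·conj(B_{e,2}) + conj(A_{e,2})·B_{e,1}) − cos(ω)·B_{e,1}·conj(B_{e,2}) ] = 0. -/

import Mathlib

/-!
Write `c = cos ω`, `s = sin ω`. Eliminating `Bⱼ = (φⱼ(e₁) - c φⱼ(e₀)) / s` by `s² + c² = 1`, the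
summand of an edge `e` becomes `(g(e₀, e₁) + g(e₁, e₀)) / s²` with
`g(u, w) = φ₁(u) · conj(φ₂(w) - c φ₂(u))`. Summing over both orientations of every edge is summing
`g` over all darts, i.e. `∑ᵥ φ₁(v) · conj(∑_{w ~ v} φ₂(w) - c deg(v) φ₂(v))`, and each term vanishes
because `φ₂` is an eigenfunction of frequency `ω`.
-/

namespace SimpleGraph

variable {V : Type*} {G : SimpleGraph V}

theorem sum_darts_eq_sum_sum_neighborFinset [Fintype V] [DecidableRel G.Adj]
    {M : Type*} [AddCommMonoid M] (f : V → V → M) :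
    ∑ d : G.Dart, f d.fst d.snd = ∑ v, ∑ w ∈ G.neighborFinset v, f v w := by
  let σ : G.Dart ≃ Σ v, G.neighborSet v :=
    { toFun := fun d => ⟨d.fst, d.snd, d.adj⟩
      invFun := fun p => ⟨(p.1, p.2), p.2.2⟩
      left_inv := fun _ => rfl
      right_inv := fun _ => rfl }
  rw [Fintype.sum_equiv σ (fun d => f d.fst d.snd) (fun p => f p.1 p.2) (fun _ => rfl),
    Fintype.sum_sigma]
  refine Finset.sum_congr rfl fun v _ => ?_
  exact (Finset.sum_subtype _ (fun w => mem_neighborFinset G v w) (f v)).symm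

section Orientation

variable {E : Type*} (e₀ e₁ : E → V) (hadj : ∀ e, G.Adj (e₀ e) (e₁ e))

def orientedDart (e : E) : G.Dart := ⟨(e₀ e, e₁ e), hadj e⟩

theorem bijective_orientedDart_or_symm
    (hinj : ∀ e e' : E, s(e₀ e, e₁ e) = s(e₀ e', e₁ e') → e = e')
    (hsurj : ∀ x ∈ G.edgeSet, ∃ e : E, s(e₀ e, e₁ e) = x) :
    Function.Bijective fun p : E × Bool =>
      bif p.2 then orientedDart e₀ e₁ hadj p.1 else (orientedDart e₀ e₁ hadj p.1).symm := by
  constructor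
  · rintro ⟨e, b⟩ ⟨e', b'⟩ h
    have hedge : (orientedDart e₀ e₁ hadj e).edge = (orientedDart e₀ e₁ hadj e').edge := by
      cases b <;> cases b' <;> simpa only [cond_true, cond_false, Dart.edge_symm]
        using congrArg Dart.edge h
    have he : e = e' := hinj e e' hedge
    subst he
    cases b <;> cases b' <;> simp_all [Dart.symm_ne, (Dart.symm_ne _).symm]
  · intro d
    obtain ⟨e, he⟩ := hsurj d.edge d.edge_mem
    rcases (dart_edge_eq_iff (orientedDart e₀ e₁ hadj e) d).1 he with h | h
    · exact ⟨(e, true), h⟩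
    · exact ⟨(e, false), by simp only [h, cond_false, Dart.symm_symm]⟩

theorem sum_darts_eq_sum_orientedDart [Fintype V] [DecidableRel G.Adj] [Fintype E]
    (hinj : ∀ e e' : E, s(e₀ e, e₁ e) = s(e₀ e', e₁ e') → e = e')
    (hsurj : ∀ x ∈ G.edgeSet, ∃ e : E, s(e₀ e, e₁ e) = x)
    {M : Type*} [AddCommMonoid M] (f : G.Dart → M) :
    ∑ d, f d = ∑ e, (f (orientedDart e₀ e₁ hadj e) + f (orientedDart e₀ e₁ hadj e).symm) := by
  rw [← Function.Bijective.sum_comp (bijective_orientedDart_or_symm e₀ e₁ hadj hinj hsurj),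
    Fintype.sum_prod_type]
  simp only [Fintype.sum_bool, cond_true, cond_false]

end Orientation

theorem sum_sum_neighborFinset_mul_conj_sub_eq_zero [Fintype V] [DecidableRel G.Adj]
    (c : ℝ) (φ ψ : V → ℂ)
    (hψ : ∀ v, ∑ w ∈ G.neighborFinset v, ψ w = (c : ℂ) * (G.degree v : ℂ) * ψ v) :
    ∑ v, ∑ w ∈ G.neighborFinset v, φ v * starRingEnd ℂ (ψ w - c * ψ v) = 0 := by
  refine Finset.sum_eq_zero fun v _ => ?_
  rw [← Finset.mul_sum, ← map_sum, Finset.sum_sub_distrib, hψ, Finset.sum_const,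
    card_neighborFinset_eq_degree, nsmul_eq_mul, mul_assoc, mul_left_comm (c : ℂ), sub_self, map_zero, mul_zero]

end SimpleGraph

theorem edge_coefficient_identity {K : Type*} [Field K] {s c : K} (hs : s ≠ 0)
    (hsc : s ^ 2 + c ^ 2 = 1) (a₁ b₁ a₂ b₂ : K) :
    c * (a₁ * a₂) + s * (a₁ * ((b₂ - a₂ * c) / s) + a₂ * ((b₁ - a₁ * c) / s))
      - c * ((b₁ - a₁ * c) / s * ((b₂ - a₂ * c) / s))
      = (a₁ * (b₂ - c * a₂) + b₁ * (a₂ - c * b₂)) / s ^ 2 := by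
  field_simp
  linear_combination (a₁ * b₂ + b₁ * a₂ - c * a₁ * a₂) * hsc

theorem qgfft_coefficient_orthogonality_general
    {V : Type*} [Fintype V]
    (G : SimpleGraph V) [DecidableRel G.Adj]
    {E : Type*} [Fintype E] (e₀ e₁ : E → V)
    (hadj : ∀ e : E, G.Adj (e₀ e) (e₁ e))
    (hinj : ∀ e e' : E, s(e₀ e, e₁ e) = s(e₀ e', e₁ e') → e = e')
    (hsurj : ∀ x ∈ G.edgeSet, ∃ e : E, s(e₀ e, e₁ e) = x)
    (ω : ℝ) (hω : Real.sin ω ≠ 0)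
    (φ₁ φ₂ : V → ℂ)
    (hφ₂ : ∀ v : V, ∑ w ∈ G.neighborFinset v, φ₂ w
      = (Real.cos ω : ℂ) * (G.degree v : ℂ) * φ₂ v) :
    ∑ e : E, ((Real.cos ω : ℂ) * (φ₁ (e₀ e) * (starRingEnd ℂ) (φ₂ (e₀ e)))
      + (Real.sin ω : ℂ) *
          (φ₁ (e₀ e) * (starRingEnd ℂ)
              ((φ₂ (e₁ e) - φ₂ (e₀ e) * (Real.cos ω : ℂ)) / (Real.sin ω : ℂ))
            + (starRingEnd ℂ) (φ₂ (e₀ e))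
              * ((φ₁ (e₁ e) - φ₁ (e₀ e) * (Real.cos ω : ℂ)) / (Real.sin ω : ℂ)))
      - (Real.cos ω : ℂ) *
          (((φ₁ (e₁ e) - φ₁ (e₀ e) * (Real.cos ω : ℂ)) / (Real.sin ω : ℂ))
            * (starRingEnd ℂ)
              ((φ₂ (e₁ e) - φ₂ (e₀ e) * (Real.cos ω : ℂ)) / (Real.sin ω : ℂ)))) = 0 := by
  have hs : (Real.sin ω : ℂ) ≠ 0 := Complex.ofReal_ne_zero.mpr hω
  have hsc : (Real.sin ω : ℂ) ^ 2 + (Real.cos ω : ℂ) ^ 2 = 1 := by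
    exact_mod_cast Real.sin_sq_add_cos_sq ω
  set c : ℂ := (Real.cos ω : ℂ)
  set s : ℂ := (Real.sin ω : ℂ)
  let g : V → V → ℂ := fun u w => φ₁ u * starRingEnd ℂ (φ₂ w - c * φ₂ u)
  calc _ = ∑ e, (g (e₀ e) (e₁ e) + g (e₁ e) (e₀ e)) / s ^ 2 := by
        refine Finset.sum_congr rfl fun e _ => ?_
        simp only [g, map_div₀, map_sub, map_mul, Complex.conj_ofReal, c, s]
        exact edge_coefficient_identity hs hsc _ _ _ _
    _ = (∑ v, ∑ w ∈ G.neighborFinset v, g v w) / s ^ 2 := by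
        rw [← Finset.sum_div, ← SimpleGraph.sum_darts_eq_sum_sum_neighborFinset,
          SimpleGraph.sum_darts_eq_sum_orientedDart e₀ e₁ hadj hinj hsurj]
        rfl
    _ = 0 := by
        rw [SimpleGraph.sum_sum_neighborFinset_mul_conj_sub_eq_zero _ φ₁ φ₂ hφ₂, zero_div]

/-- for two vertex eigenfunctions of frequency `ω` with `sin ω ≠ 0`,
the coefficient combination
`cos ω · A₁Ā₂ + sin ω · (A₁B̄₂ + Ā₂B₁) − cos ω · B₁B̄₂` sums to zero over the edges. -/
theorem qgfft_coefficient_orthogonality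
    {V : Type*} [Fintype V] [DecidableEq V]
    (G : SimpleGraph V) [DecidableRel G.Adj]
    (hdeg : ∀ v : V, 0 < G.degree v)
    {E : Type*} [Fintype E] (e₀ e₁ : E → V)
    (hadj : ∀ e : E, G.Adj (e₀ e) (e₁ e))
    (hinj : ∀ e e' : E, s(e₀ e, e₁ e) = s(e₀ e', e₁ e') → e = e')
    (hsurj : ∀ x ∈ G.edgeSet, ∃ e : E, s(e₀ e, e₁ e) = x)
    (ω : ℝ) (hω : Real.sin ω ≠ 0)
    (φ₁ φ₂ : V → ℂ)
    (hφ₁ : ∀ v : V, ∑ w ∈ G.neighborFinset v, φ₁ w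
      = (Real.cos ω : ℂ) * (G.degree v : ℂ) * φ₁ v)
    (hφ₂ : ∀ v : V, ∑ w ∈ G.neighborFinset v, φ₂ w
      = (Real.cos ω : ℂ) * (G.degree v : ℂ) * φ₂ v) :
    ∑ e : E, ((Real.cos ω : ℂ) * (φ₁ (e₀ e) * (starRingEnd ℂ) (φ₂ (e₀ e)))
      + (Real.sin ω : ℂ) *
          (φ₁ (e₀ e) * (starRingEnd ℂ)
              ((φ₂ (e₁ e) - φ₂ (e₀ e) * (Real.cos ω : ℂ)) / (Real.sin ω : ℂ))
            + (starRingEnd ℂ) (φ₂ (e₀ e))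
              * ((φ₁ (e₁ e) - φ₁ (e₀ e) * (Real.cos ω : ℂ)) / (Real.sin ω : ℂ)))
      - (Real.cos ω : ℂ) *
          (((φ₁ (e₁ e) - φ₁ (e₀ e) * (Real.cos ω : ℂ)) / (Real.sin ω : ℂ))
            * (starRingEnd ℂ)
              ((φ₂ (e₁ e) - φ₂ (e₀ e) * (Real.cos ω : ℂ)) / (Real.sin ω : ℂ)))) = 0 :=
  qgfft_coefficient_orthogonality_general G e₀ e₁ hadj hinj hsurj ω hω φ₁ φ₂ hφ₂
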